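/- arXiv:1108.5114 — 3 statements merged into one kernel-verified Lean document; each statement's English description precedes it below -/
import Mathlib

section
/- Let n be odd, F a field of characteristic ≠ 2, G = GL_n(F), and let L ⊆ M_n(F) be a subring that is a field extension of F of odd degree. If θ is an involution of G of the form θ(g) = ν^{-1}·ᵗg^{-1}·ν for some symmetric ν ∈ G, and θ(L^×) = L^×, then θ(t) = t^{-1} for all t ∈ L^×. -/
/-!
The map `σ x = ν⁻¹ xᵀ ν` is an involutive anti-automorphism of `M_n(F)`, and `θ_ν g = σ g⁻¹`.
Stability of `L^×` under `θ_ν` makes `σ` preserve `L`; as `L` is commutative, `σ` restricts to an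
`F`-automorphism of `L` of order dividing `2`. By Artin's theorem the order of an automorphism of
`L / F` divides `[L : F]`, which is odd, so `σ` is the identity on `L` and `θ_ν t = σ t⁻¹ = t⁻¹`.
-/

open Matrix

-- Artin: the fixed field of `⟨σ⟩` has index `orderOf σ`.
theorem AlgEquiv.orderOf_dvd_finrank {F E : Type*} [Field F] [Field E] [Algebra F E]
    [FiniteDimensional F E] (σ : E ≃ₐ[F] E) : orderOf σ ∣ Module.finrank F E := by
  rw [← Nat.card_zpowers, ← IntermediateField.finrank_fixedField_eq_card,
    ← Module.finrank_mul_finrank F (IntermediateField.fixedField (Subgroup.zpowers σ)) E]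
  exact dvd_mul_left _ _

theorem AlgEquiv.eq_one_of_sq_eq_one_of_odd_finrank {F E : Type*} [Field F] [Field E]
    [Algebra F E] [FiniteDimensional F E] (hodd : Odd (Module.finrank F E)) {σ : E ≃ₐ[F] E}
    (hσ : σ ^ 2 = 1) : σ = 1 :=
  orderOf_eq_one_iff.mp <| Nat.eq_one_of_dvd_coprimes (Nat.coprime_two_left.mpr hodd)
    (orderOf_dvd_of_pow_eq_one hσ) σ.orderOf_dvd_finrank

theorem Function.Involutive.map_one_of_map_mul_rev {M : Type*} [MulOneClass M] {f : M → M}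
    (hf : Function.Involutive f) (hmul : ∀ x y, f (x * y) = f y * f x) : f 1 = 1 := by
  simpa [hf 1] using (hmul (f 1) 1).symm

namespace Subalgebra

variable {F A : Type*} [Field F] [Ring A] [Algebra F A] (L : Subalgebra F A)
  {τ : A →ₗ[F] A}

def restrictAntiInvolution (hτmul : ∀ x y, τ (x * y) = τ y * τ x)
    (hτ : Function.Involutive τ) (hτL : ∀ x ∈ L, τ x ∈ L)
    (hL : ∀ x ∈ L, ∀ y ∈ L, x * y = y * x) : L ≃ₐ[F] L where
  toFun x := ⟨τ x, hτL x x.2⟩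
  invFun x := ⟨τ x, hτL x x.2⟩
  left_inv x := Subtype.ext (hτ x)
  right_inv x := Subtype.ext (hτ x)
  map_mul' x y := Subtype.ext <| (hτmul x y).trans (hL _ (hτL y y.2) _ (hτL x x.2))
  map_add' x y := Subtype.ext (τ.map_add x y)
  commutes' r := Subtype.ext <| by
    simp [Algebra.algebraMap_eq_smul_one, hτ.map_one_of_map_mul_rev hτmul]

theorem antiInvolution_eq_self_of_odd_finrank (hτmul : ∀ x y, τ (x * y) = τ y * τ x)
    (hτ : Function.Involutive τ) (hτL : ∀ x ∈ L, τ x ∈ L) (hL : IsField L)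
    (hodd : Odd (Module.finrank F L)) {x : A} (hx : x ∈ L) : τ x = x := by
  let := hL.toField
  have : FiniteDimensional F L := Module.finite_of_finrank_pos hodd.pos
  have hσ := AlgEquiv.eq_one_of_sq_eq_one_of_odd_finrank hodd
    (σ := L.restrictAntiInvolution hτmul hτ hτL fun x hx y hy =>
      congrArg Subtype.val (hL.mul_comm ⟨x, hx⟩ ⟨y, hy⟩))
    (AlgEquiv.ext fun x => Subtype.ext (hτ x))
  exact congrArg Subtype.val (DFunLike.congr_fun hσ ⟨x, hx⟩)

end Subalgebra

namespace Matrix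

variable {n R : Type*} [Fintype n] [DecidableEq n] [CommRing R]

noncomputable def formAdjoint (ν : Matrix n n R) : Matrix n n R →ₗ[R] Matrix n n R where
  toFun x := ν⁻¹ * xᵀ * ν
  map_add' x y := by simp [Matrix.mul_add, Matrix.add_mul]
  map_smul' c x := by simp

theorem formAdjoint_apply (ν x : Matrix n n R) : formAdjoint ν x = ν⁻¹ * xᵀ * ν := rfl

theorem formAdjoint_mul {ν : Matrix n n R} (hν : IsUnit ν.det) (x y : Matrix n n R) :
    formAdjoint ν (x * y) = formAdjoint ν y * formAdjoint ν x := by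
  simp [formAdjoint_apply, Matrix.mul_assoc, mul_nonsing_inv_cancel_left _ _ hν]

theorem formAdjoint_involutive {ν : Matrix n n R} (hsymm : νᵀ = ν) (hν : IsUnit ν.det) :
    Function.Involutive (formAdjoint ν) := fun x => by
  simp [formAdjoint_apply, transpose_nonsing_inv, hsymm, Matrix.mul_assoc,
    nonsing_inv_mul _ hν, nonsing_inv_mul_cancel_left _ _ hν]

theorem formAdjoint_nonsing_inv (ν x : Matrix n n R) :
    formAdjoint ν x⁻¹ = ν⁻¹ * (xᵀ)⁻¹ * ν := by
  rw [formAdjoint_apply, transpose_nonsing_inv]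

variable {K : Type*} [Field K] {L : Subalgebra K (Matrix n n K)}

theorem exists_mul_eq_one_of_mem_of_isField (hL : IsField L) {x : Matrix n n K} (hx : x ∈ L)
    (hx0 : x ≠ 0) : ∃ y ∈ L, x * y = 1 := by
  obtain ⟨y, hy⟩ := hL.mul_inv_cancel (a := ⟨x, hx⟩) (Subtype.coe_ne_coe.mp hx0)
  exact ⟨y, y.2, congrArg Subtype.val hy⟩

theorem nonsing_inv_mem_of_isField (hL : IsField L) {x : Matrix n n K} (hx : x ∈ L) :
    x⁻¹ ∈ L := by
  rcases eq_or_ne x 0 with rfl | hx0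
  · simp
  obtain ⟨y, hyL, hy⟩ := exists_mul_eq_one_of_mem_of_isField hL hx hx0
  rwa [inv_eq_right_inv hy]

theorem isUnit_of_mem_of_isField (hL : IsField L) {x : Matrix n n K} (hx : x ∈ L)
    (hx0 : x ≠ 0) : IsUnit x := by
  obtain ⟨y, -, hy⟩ := exists_mul_eq_one_of_mem_of_isField hL hx hx0
  exact (isUnit_iff_isUnit_det x).mpr (isUnit_det_of_right_inverse hy)

theorem formAdjoint_mem_of_isField (hL : IsField L) {ν : Matrix n n K}
    (hθ : ∀ y ∈ L, IsUnit y → ν⁻¹ * (yᵀ)⁻¹ * ν ∈ L) {x : Matrix n n K} (hx : x ∈ L) :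
    formAdjoint ν x ∈ L := by
  rcases eq_or_ne x 0 with rfl | hx0
  · simp
  have hxu : IsUnit x := isUnit_of_mem_of_isField hL hx hx0
  have hθx := hθ x⁻¹ (nonsing_inv_mem_of_isField hL hx) (isUnit_nonsing_inv_iff.mpr hxu)
  rwa [← formAdjoint_nonsing_inv, nonsing_inv_nonsing_inv _ ((isUnit_iff_isUnit_det x).mp hxu)]
    at hθx

end Matrix

theorem stmt12_general (F : Type*) [Field F] {n : ℕ}
    (L : Subalgebra F (Matrix (Fin n) (Fin n) F))
    (hL : IsField L) (hLodd : Odd (Module.finrank F L))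
    (ν : Matrix (Fin n) (Fin n) F) (hν : νᵀ = ν) (hνdet : IsUnit ν.det)
    (hstab : (fun x : Matrix (Fin n) (Fin n) F => ν⁻¹ * (xᵀ)⁻¹ * ν) ''
        {x | x ∈ L ∧ IsUnit x} = {x | x ∈ L ∧ IsUnit x}) :
    ∀ t : Matrix (Fin n) (Fin n) F, t ∈ L → IsUnit t →
      ν⁻¹ * (tᵀ)⁻¹ * ν = t⁻¹ := by
  have hadj_mem : ∀ x ∈ L, formAdjoint ν x ∈ L := fun x hx =>
    formAdjoint_mem_of_isField hL
      (fun y hy hyu => (hstab.subset ⟨y, ⟨hy, hyu⟩, rfl⟩).1) hx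
  have hfix : ∀ x ∈ L, formAdjoint ν x = x := fun x hx =>
    L.antiInvolution_eq_self_of_odd_finrank (formAdjoint_mul hνdet)
      (formAdjoint_involutive hν hνdet) hadj_mem hL hLodd hx
  intro t ht _
  rw [← formAdjoint_nonsing_inv, hfix _ (nonsing_inv_mem_of_isField hL ht)]

/-- Let `n` be odd, `F` a field of characteristic `≠ 2`, `G = GL_n(F)`, and
`L ⊆ M_n(F)` a subring that is a field extension of `F` of odd degree. If
`θ(g) = ν⁻¹·ᵀg⁻¹·ν` (with `ν ∈ G` symmetric) is an involution of `G` with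
`θ(L^×) = L^×`, then `θ(t) = t⁻¹` for all `t ∈ L^×`. -/
theorem stmt12 (F : Type*) [Field F] (h2 : (2 : F) ≠ 0) {n : ℕ} (hn : Odd n)
    (L : Subalgebra F (Matrix (Fin n) (Fin n) F))
    (hL : IsField L) (hLodd : Odd (Module.finrank F L))
    (ν : Matrix (Fin n) (Fin n) F) (hν : νᵀ = ν) (hνdet : IsUnit ν.det)
    (hstab : (fun x : Matrix (Fin n) (Fin n) F => ν⁻¹ * (xᵀ)⁻¹ * ν) ''
        {x | x ∈ L ∧ IsUnit x} = {x | x ∈ L ∧ IsUnit x}) :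
    ∀ t : Matrix (Fin n) (Fin n) F, t ∈ L → IsUnit t →
      ν⁻¹ * (tᵀ)⁻¹ * ν = t⁻¹ :=
  stmt12_general F L hL hLodd ν hν hνdet hstab
end

section
/- Let E/F be a finite separable extension of degree n with a fixed F-basis, T = {regular representation matrices of elements of E^×} ⊆ GL_n(F). The map a ↦ θ^a (where θ^a = θ_{ν^a} with ν^a the Gram matrix of the trace form of a) is a bijection from E^×/F^× to the set of orthogonal involutions θ of GL_n(F) for which T is θ-split (i.e., θ(t) = t^{-1} for all t ∈ T). -/
open Matrix

variable (F E : Type*) [Field F] [Field E] [Algebra F E]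

/-- The Gram matrix `ν^a` of the trace form `⟨x,y⟩_a = tr_{E/F}(a·x·y)` with respect
to the basis `e`. -/
noncomputable def gramMat [FiniteDimensional F E] {n : ℕ} (e : Module.Basis (Fin n) F E)
    (a : E) : Matrix (Fin n) (Fin n) F :=
  Matrix.of fun i j => Algebra.trace F E (a * e i * e j)

/-- The orthogonal involution `θ_ν(g) = ν⁻¹ · ᵀg⁻¹ · ν` of `GL_n(F)`. -/
noncomputable def thetaMat {F : Type*} [Field F] {n : ℕ} (ν g : Matrix (Fin n) (Fin n) F) :
    Matrix (Fin n) (Fin n) F :=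
  ν⁻¹ * (gᵀ)⁻¹ * ν

/-!
Write `B` for the Gram matrix of the trace form, so that `ν^a = B · a̲` and `a̲ᵀ B = B a̲`
(multiplication is self-adjoint for the trace form). For invertible `ν`, `θ_ν(x̲) = x̲⁻¹` is
equivalent to `x̲ᵀ ν = ν x̲`, which `ν^a` satisfies since `E` is commutative. Conversely, if
`ν` satisfies it for all `x`, then `B⁻¹ ν` commutes with the regular representation, so it
is some `a̲`, since `E` is its own centralizer in `End_F E`; hence `ν = ν^a`. Finally
`θ_{ν₁} = θ_{ν₂}` makes `ν₁ ν₂⁻¹` commute with all of `GL_n(F)`, so it is a scalar `c`;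
separability makes `B` invertible, so `ν^a = c ν^b = ν^{c b}` forces `a = c b`.
-/

theorem Matrix.nonsing_inv_mul_eq_mul_nonsing_inv_of_mul_eq_mul {ι R : Type*} [Fintype ι]
    [DecidableEq ι] [CommRing R] {B X Y : Matrix ι ι R} (hB : IsUnit B.det)
    (h : X * B = B * Y) : B⁻¹ * X = Y * B⁻¹ := by
  calc B⁻¹ * X = B⁻¹ * (X * B) * B⁻¹ := by
        rw [mul_assoc _ _ B⁻¹, mul_nonsing_inv_cancel_right _ _ hB]
    _ = Y * B⁻¹ := by rw [h, nonsing_inv_mul_cancel_left _ _ hB]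

section Involution

variable {F} {n : ℕ}

theorem thetaMat_eq_inv_iff {ν M : Matrix (Fin n) (Fin n) F} (hν : IsUnit ν.det)
    (hM : IsUnit M.det) : thetaMat ν M = M⁻¹ ↔ Mᵀ * ν = ν * M := by
  have hMt : IsUnit Mᵀ.det := by rwa [det_transpose]
  constructor
  · intro h
    calc Mᵀ * ν = Mᵀ * ν * (M⁻¹ * M) := by rw [nonsing_inv_mul M hM, mul_one]
      _ = Mᵀ * ν * (ν⁻¹ * (Mᵀ)⁻¹ * ν * M) := by rw [← h, thetaMat]
      _ = ν * M := by
        simp only [mul_assoc, mul_nonsing_inv_cancel_left _ _ hν,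
          mul_nonsing_inv_cancel_left _ _ hMt]
  · intro h
    refine (inv_eq_left_inv ?_).symm
    rw [thetaMat, mul_assoc, ← h]
    simp only [mul_assoc, nonsing_inv_mul_cancel_left _ _ hMt, nonsing_inv_mul _ hν]

theorem commute_mul_inv_of_thetaMat_eq {ν₁ ν₂ : Matrix (Fin n) (Fin n) F}
    (hν₁ : IsUnit ν₁.det) (hν₂ : IsUnit ν₂.det)
    (h : ∀ g : Matrix (Fin n) (Fin n) F, IsUnit g.det → thetaMat ν₁ g = thetaMat ν₂ g)
    {k : Matrix (Fin n) (Fin n) F} (hk : IsUnit k.det) :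
    Commute k (ν₁ * ν₂⁻¹) := by
  have hconj := h (k⁻¹)ᵀ (by rwa [det_transpose, isUnit_nonsing_inv_det_iff])
  rw [thetaMat, thetaMat, transpose_transpose, nonsing_inv_nonsing_inv _ hk] at hconj
  calc k * (ν₁ * ν₂⁻¹) = ν₁ * (ν₁⁻¹ * k * ν₁) * ν₂⁻¹ := by
        simp only [mul_assoc, mul_nonsing_inv_cancel_left _ _ hν₁]
    _ = ν₁ * ν₂⁻¹ * k := by
        rw [hconj]; simp only [mul_assoc, mul_nonsing_inv _ hν₂, mul_one]

theorem exists_eq_smul_of_thetaMat_eq {ν₁ ν₂ : Matrix (Fin n) (Fin n) F}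
    (hν₁ : IsUnit ν₁.det) (hν₂ : IsUnit ν₂.det)
    (h : ∀ g : Matrix (Fin n) (Fin n) F, IsUnit g.det → thetaMat ν₁ g = thetaMat ν₂ g) :
    ∃ c : F, ν₁ = c • ν₂ := by
  obtain ⟨c, hc⟩ := mem_range_scalar_of_commute_transvectionStruct fun t =>
    commute_mul_inv_of_thetaMat_eq hν₁ hν₂ h (by rw [t.det]; exact isUnit_one)
  refine ⟨c, ?_⟩
  calc ν₁ = ν₁ * ν₂⁻¹ * ν₂ := (nonsing_inv_mul_cancel_right _ _ hν₂).symm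
    _ = c • ν₂ := by rw [← hc, scalar_apply, smul_eq_diagonal_mul]

end Involution

section LeftMulMatrix

variable {R S ι : Type*} [CommRing R] [CommRing S] [Algebra R S] [Fintype ι] [DecidableEq ι]

theorem Algebra.exists_leftMulMatrix_eq_of_forall_commute (b : Module.Basis ι R S)
    {C : Matrix ι ι R} (hC : ∀ x : S, Commute C (Algebra.leftMulMatrix b x)) :
    ∃ a : S, C = Algebra.leftMulMatrix b a := by
  set f := Matrix.toLin b b C
  have hf : ∀ x : S, f x = x * f 1 := fun x => by
    simpa [Matrix.toLin_mul b b b, Algebra.leftMulMatrix_apply] using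
      congrArg (fun M => Matrix.toLin b b M 1) (hC x).eq
  refine ⟨f 1, ?_⟩
  calc C = LinearMap.toMatrix b b f := (LinearMap.toMatrix_toLin b b C).symm
    _ = Algebra.leftMulMatrix b (f 1) := by
      rw [Algebra.leftMulMatrix_apply]
      congr 1
      ext x
      rw [hf x, Algebra.coe_lmul_eq_mul, LinearMap.mul_apply', mul_comm]

end LeftMulMatrix

section GramMatrix

variable {F E} [FiniteDimensional F E] {n : ℕ} (e : Module.Basis (Fin n) F E)

theorem gramMat_transpose (a : E) : (gramMat F E e a)ᵀ = gramMat F E e a := by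
  ext i j
  simp only [transpose_apply, gramMat, of_apply, mul_right_comm]

theorem gramMat_one : gramMat F E e 1 = Algebra.traceMatrix F e := by
  ext i j
  rw [gramMat, of_apply, one_mul, Algebra.traceMatrix_apply, Algebra.traceForm_apply]

theorem gramMat_zero : gramMat F E e 0 = 0 := by
  ext i j
  rw [gramMat, of_apply, zero_mul, zero_mul, map_zero, Matrix.zero_apply]

theorem gramMat_smul (c : F) (a : E) : gramMat F E e (c • a) = c • gramMat F E e a := by
  ext i j
  rw [gramMat, gramMat, of_apply, Matrix.smul_apply, of_apply, smul_mul_assoc, smul_mul_assoc,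
    map_smul, smul_eq_mul]

theorem gramMat_mul_leftMulMatrix (a x : E) :
    gramMat F E e a * Algebra.leftMulMatrix e x = gramMat F E e (a * x) := by
  ext i j
  have hx : x * e j = ∑ k, e.repr (x * e j) k • e k := (e.sum_repr _).symm
  simp only [mul_apply, gramMat, of_apply]
  rw [mul_right_comm a x, mul_assoc (a * e i), hx, Finset.mul_sum, map_sum]
  refine Finset.sum_congr rfl fun k _ => ?_
  rw [Algebra.leftMulMatrix_eq_repr_mul, mul_smul_comm, map_smul, smul_eq_mul, mul_comm]

theorem leftMulMatrix_transpose_mul_gramMat (a x : E) :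
    (Algebra.leftMulMatrix e x)ᵀ * gramMat F E e a =
      gramMat F E e a * Algebra.leftMulMatrix e x := by
  rw [← gramMat_transpose e a, ← transpose_mul, gramMat_transpose, gramMat_mul_leftMulMatrix,
    gramMat_transpose]

theorem traceMatrix_mul_leftMulMatrix (a : E) :
    Algebra.traceMatrix F e * Algebra.leftMulMatrix e a = gramMat F E e a := by
  rw [← gramMat_one, gramMat_mul_leftMulMatrix, one_mul]

theorem isUnit_det_leftMulMatrix {x : E} (hx : x ≠ 0) :
    IsUnit (Algebra.leftMulMatrix e x).det := by
  rw [← Algebra.norm_eq_matrix_det]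
  exact (Algebra.norm_ne_zero_iff.mpr hx).isUnit

variable [Algebra.IsSeparable F E]

theorem isUnit_det_traceMatrix : IsUnit (Algebra.traceMatrix F e).det :=
  Algebra.discr_isUnit_of_basis F e

theorem isUnit_det_gramMat {a : E} (ha : a ≠ 0) : IsUnit (gramMat F E e a).det := by
  rw [← traceMatrix_mul_leftMulMatrix, det_mul]
  exact (isUnit_det_traceMatrix e).mul (isUnit_det_leftMulMatrix e ha)

theorem gramMat_injective : Function.Injective (gramMat F E e) := fun a b h => by
  rw [← traceMatrix_mul_leftMulMatrix, ← traceMatrix_mul_leftMulMatrix] at h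
  exact Algebra.leftMulMatrix_injective e
    (by simpa [nonsing_inv_mul_cancel_left _ _ (isUnit_det_traceMatrix e)] using
      congrArg ((Algebra.traceMatrix F e)⁻¹ * ·) h)

theorem exists_gramMat_eq_of_forall_transpose_mul {ν : Matrix (Fin n) (Fin n) F}
    (hν : ∀ x : E, (Algebra.leftMulMatrix e x)ᵀ * ν = ν * Algebra.leftMulMatrix e x) :
    ∃ a : E, ν = gramMat F E e a := by
  have hB := isUnit_det_gramMat e (one_ne_zero (α := E))
  obtain ⟨a, ha⟩ := Algebra.exists_leftMulMatrix_eq_of_forall_commute e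
    (C := (gramMat F E e 1)⁻¹ * ν) fun x => by
      calc (gramMat F E e 1)⁻¹ * ν * Algebra.leftMulMatrix e x
          = (gramMat F E e 1)⁻¹ * (Algebra.leftMulMatrix e x)ᵀ * ν := by
            rw [mul_assoc, ← hν, mul_assoc]
        _ = Algebra.leftMulMatrix e x * ((gramMat F E e 1)⁻¹ * ν) := by
            rw [nonsing_inv_mul_eq_mul_nonsing_inv_of_mul_eq_mul hB
              (leftMulMatrix_transpose_mul_gramMat e 1 x), mul_assoc]
  refine ⟨a, ?_⟩
  rw [← one_mul a, ← gramMat_mul_leftMulMatrix, ← ha, mul_nonsing_inv_cancel_left _ _ hB]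

end GramMatrix

/-- Let `E/F` be a finite separable extension of degree `n` with `F`-basis `e`, and
let `T ⊆ GL_n(F)` be the image of `E^×` under the regular representation. The map
`a ↦ θ^a = θ_{ν^a}` is a bijection from `E^×/F^×` onto the set of orthogonal
involutions `θ` of `GL_n(F)` for which `T` is `θ`-split:
(1) each `θ^a` splits `T`; (2) `θ^a = θ^b` (on `GL_n(F)`) only if `a, b` agree up to
`F^×`; (3) every orthogonal involution splitting `T` equals some `θ^a`. -/
theorem stmt13 [FiniteDimensional F E] [Algebra.IsSeparable F E] {n : ℕ}
    (e : Module.Basis (Fin n) F E) :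
    (∀ a : E, a ≠ 0 → ∀ x : E, x ≠ 0 →
      thetaMat (gramMat F E e a) (Algebra.leftMulMatrix e x) =
        (Algebra.leftMulMatrix e x)⁻¹) ∧
    (∀ a b : E, a ≠ 0 → b ≠ 0 →
      (∀ g : Matrix (Fin n) (Fin n) F, IsUnit g.det →
        thetaMat (gramMat F E e a) g = thetaMat (gramMat F E e b) g) →
      ∃ c : F, c ≠ 0 ∧ a = algebraMap F E c * b) ∧
    (∀ ν : Matrix (Fin n) (Fin n) F, νᵀ = ν → IsUnit ν.det →
      (∀ x : E, x ≠ 0 →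
        thetaMat ν (Algebra.leftMulMatrix e x) = (Algebra.leftMulMatrix e x)⁻¹) →
      ∃ a : E, a ≠ 0 ∧ ∀ g : Matrix (Fin n) (Fin n) F, IsUnit g.det →
        thetaMat ν g = thetaMat (gramMat F E e a) g) := by
  refine ⟨fun a ha x hx => ?split, fun a b ha hb hθ => ?injective,
    fun ν _ hν hsplit => ?surjective⟩
  case split =>
    exact (thetaMat_eq_inv_iff (isUnit_det_gramMat e ha) (isUnit_det_leftMulMatrix e hx)).2
      (leftMulMatrix_transpose_mul_gramMat e a x)
  case injective =>
    obtain ⟨c, hc⟩ := exists_eq_smul_of_thetaMat_eq (isUnit_det_gramMat e ha)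
      (isUnit_det_gramMat e hb) hθ
    have hab : a = c • b := gramMat_injective e (by rw [gramMat_smul, hc])
    refine ⟨c, ?_, by rw [hab, Algebra.smul_def]⟩
    rintro rfl
    exact ha (by rw [hab, zero_smul])
  case surjective =>
    obtain ⟨a, rfl⟩ := exists_gramMat_eq_of_forall_transpose_mul e fun x => by
      rcases eq_or_ne x 0 with rfl | hx
      · simp
      · exact (thetaMat_eq_inv_iff hν (isUnit_det_leftMulMatrix e hx)).1 (hsplit x hx)
    refine ⟨a, ?_, fun _ _ => rfl⟩
    rintro rfl
    have : Nonempty (Fin n) := e.index_nonempty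
    simp [gramMat_zero] at hν
end

section
/- Let G be a group, θ an automorphism of G with θ² = id, Z a θ-stable central subgroup, and let G_θ = {g ∈ G : gθ(g)^{-1} ∈ Z} and G^θ = {g : θ(g) = g}. Let Z¹ = {z ∈ Z : θ(z) = z^{-1}} and B¹ = {zθ(z)^{-1} : z ∈ Z}. Then the map g ↦ gθ(g)^{-1} induces an injective group homomorphism from G_θ/(Z·G^θ) into Z¹/B¹, and Z¹/B¹ is an elementary abelian 2-group (every element has order dividing 2). -/
/-! The twisting map `μ g = g * (θ g)⁻¹` satisfies `θ (μ g) = (μ g)⁻¹` because `θ` is an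
involution, and `μ (g * h) = g * μ h * (θ g)⁻¹`, which is `μ g * μ h` as soon as `μ h` is
central. In any group `μ g = μ z` exactly when `z⁻¹ * g` is `θ`-fixed, which identifies the
kernel of the induced map with `Z · G^θ`. Finally, for `z` with `θ z = z⁻¹` one has
`z * z = z * (θ z)⁻¹ = μ z`, so `Z¹/B¹` has exponent dividing `2`. -/

namespace MulEquiv

variable {G : Type*} [Group G] (θ : G ≃* G)

theorem map_mul_inv_map_eq_inv (hθ : Function.Involutive θ) (g : G) :
    θ (g * (θ g)⁻¹) = (g * (θ g)⁻¹)⁻¹ := by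
  rw [map_mul, map_inv, hθ g, mul_inv_rev, inv_inv]

theorem mul_mul_inv_map_mul {g h : G} (hh : h * (θ h)⁻¹ ∈ Subgroup.center G) :
    g * h * (θ (g * h))⁻¹ = g * (θ g)⁻¹ * (h * (θ h)⁻¹) := by
  calc g * h * (θ (g * h))⁻¹ = g * (h * (θ h)⁻¹) * (θ g)⁻¹ := by rw [map_mul]; group
    _ = g * (θ g)⁻¹ * (h * (θ h)⁻¹) := by
      rw [mul_assoc, (Subgroup.mem_center_iff.mp hh (θ g)⁻¹).symm, mul_assoc]

theorem mul_inv_map_eq_mul_inv_map_iff (g z : G) :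
    g * (θ g)⁻¹ = z * (θ z)⁻¹ ↔ θ (z⁻¹ * g) = z⁻¹ * g := by
  rw [map_mul, map_inv]
  constructor <;> intro h
  · calc (θ z)⁻¹ * θ g = (θ z)⁻¹ * (g * (θ g)⁻¹)⁻¹ * g := by group
      _ = z⁻¹ * g := by rw [h]; group
  · calc g * (θ g)⁻¹ = z * (z⁻¹ * g) * ((θ z)⁻¹ * θ g)⁻¹ * (θ z)⁻¹ := by group
      _ = z * (θ z)⁻¹ := by rw [h]; group

theorem mul_inv_map_eq_mul_inv_map_iff_exists_fixed (g z : G) :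
    g * (θ g)⁻¹ = z * (θ z)⁻¹ ↔ ∃ h : G, θ h = h ∧ g = z * h := by
  rw [mul_inv_map_eq_mul_inv_map_iff]
  constructor
  · exact fun hfix => ⟨z⁻¹ * g, hfix, by group⟩
  · rintro ⟨h, hfix, rfl⟩
    rwa [inv_mul_cancel_left]

theorem mul_self_eq_mul_inv_map {z : G} (hz : θ z = z⁻¹) : z * z = z * (θ z)⁻¹ := by
  rw [hz, inv_inv]

end MulEquiv

theorem stmt16_general (G : Type*) [Group G] (θ : G ≃* G) (hθ : ∀ g, θ (θ g) = g)
    (Z : Subgroup G) (hZc : Z ≤ Subgroup.center G) :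
    (∀ g : G, g * (θ g)⁻¹ ∈ Z → θ (g * (θ g)⁻¹) = (g * (θ g)⁻¹)⁻¹) ∧
    (∀ g h : G, g * (θ g)⁻¹ ∈ Z → h * (θ h)⁻¹ ∈ Z →
      (g * h) * (θ (g * h))⁻¹ ∈ Z ∧
      (g * h) * (θ (g * h))⁻¹ = (g * (θ g)⁻¹) * (h * (θ h)⁻¹)) ∧
    (∀ g : G, g * (θ g)⁻¹ ∈ Z →
      ((∃ z ∈ Z, g * (θ g)⁻¹ = z * (θ z)⁻¹) ↔
        (∃ z ∈ Z, ∃ h : G, θ h = h ∧ g = z * h))) ∧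
    (∀ z ∈ Z, θ z = z⁻¹ → ∃ w ∈ Z, z * z = w * (θ w)⁻¹) := by
  refine ⟨fun g _ => θ.map_mul_inv_map_eq_inv hθ g, fun g h hg hh => ?_,
    fun g _ => ?_, fun z hz hzθ => ⟨z, hz, θ.mul_self_eq_mul_inv_map hzθ⟩⟩
  · have hmul := θ.mul_mul_inv_map_mul (g := g) (hZc hh)
    exact ⟨hmul ▸ Z.mul_mem hg hh, hmul⟩
  · simp only [θ.mul_inv_map_eq_mul_inv_map_iff_exists_fixed]

/-- Let `G` be a group, `θ` an involutive automorphism, `Z` a `θ`-stable central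
subgroup, `G_θ = {g : μ(g) ∈ Z}` where `μ(g) = g·θ(g)⁻¹`, and `G^θ` the fixed
points. Then `μ` induces an injective group homomorphism
`G_θ/(Z·G^θ) → Z¹/B¹` where `Z¹ = {z ∈ Z : θ(z) = z⁻¹}`, `B¹ = {z·θ(z)⁻¹ : z ∈ Z}`,
and `Z¹/B¹` is an elementary abelian 2-group:
(1) `μ` takes values in `Z¹`; (2) `μ` is a homomorphism on `G_θ`;
(3) `μ(g) ∈ B¹` iff `g ∈ Z·G^θ` (injectivity of the induced map);
(4) squares in `Z¹` lie in `B¹`. -/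
theorem stmt16 (G : Type*) [Group G] (θ : G ≃* G) (hθ : ∀ g, θ (θ g) = g)
    (Z : Subgroup G) (hZc : Z ≤ Subgroup.center G) (hZθ : ∀ z ∈ Z, θ z ∈ Z) :
    (∀ g : G, g * (θ g)⁻¹ ∈ Z → θ (g * (θ g)⁻¹) = (g * (θ g)⁻¹)⁻¹) ∧
    (∀ g h : G, g * (θ g)⁻¹ ∈ Z → h * (θ h)⁻¹ ∈ Z →
      (g * h) * (θ (g * h))⁻¹ ∈ Z ∧
      (g * h) * (θ (g * h))⁻¹ = (g * (θ g)⁻¹) * (h * (θ h)⁻¹)) ∧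
    (∀ g : G, g * (θ g)⁻¹ ∈ Z →
      ((∃ z ∈ Z, g * (θ g)⁻¹ = z * (θ z)⁻¹) ↔
        (∃ z ∈ Z, ∃ h : G, θ h = h ∧ g = z * h))) ∧
    (∀ z ∈ Z, θ z = z⁻¹ → ∃ w ∈ Z, z * z = w * (θ w)⁻¹) :=
  stmt16_general G θ hθ Z hZc
end
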